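/- arXiv:1304.0707 — 5 statements merged into one kernel-verified Lean document; each statement's English description precedes it below -/
import Mathlib

section
/- In any Heyting algebra, for all elements x, a, y, d1, d2 one has ((x ⊓ a) ⇨ d1) ⊓ (y ⇨ (a ⊔ d2)) ≤ (x ⊓ y) ⇨ (d1 ⊔ d2). -/
theorem heyting_joint_consistency_ineq {A : Type*} [HeytingAlgebra A]
    (x a y d1 d2 : A) :
    ((x ⊓ a) ⇨ d1) ⊓ (y ⇨ (a ⊔ d2)) ≤ (x ⊓ y) ⇨ (d1 ⊔ d2) := by
  rw [le_himp_iff]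
  have h1 : ((x ⊓ a) ⇨ d1) ⊓ (y ⇨ (a ⊔ d2)) ⊓ (x ⊓ y)
      ≤ ((x ⊓ a) ⇨ d1) ⊓ x ⊓ (a ⊔ d2) := by
    calc ((x ⊓ a) ⇨ d1) ⊓ (y ⇨ (a ⊔ d2)) ⊓ (x ⊓ y)
        = (((x ⊓ a) ⇨ d1) ⊓ x) ⊓ ((y ⇨ (a ⊔ d2)) ⊓ y) := by ac_rfl
      _ ≤ (((x ⊓ a) ⇨ d1) ⊓ x) ⊓ (a ⊔ d2) :=
          inf_le_inf_left _ himp_inf_le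
  refine h1.trans ?_
  rw [inf_sup_left]
  apply sup_le_sup
  · calc ((x ⊓ a) ⇨ d1) ⊓ x ⊓ a = ((x ⊓ a) ⇨ d1) ⊓ (x ⊓ a) := by ac_rfl
      _ ≤ d1 := himp_inf_le
  · exact inf_le_right
end

section
/- Let (Γ, Δ) be a consistent theory in a Heyting algebra A. Then for every a ∈ A, at least one of the theories (Γ ∪ {a}, Δ) and (Γ, Δ ∪ {a}) is consistent. -/
/-- A theory `(Γ, Δ)` in a Heyting algebra is consistent if no finite meet of
elements of `Γ` is below a finite join of elements of `Δ`. -/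
def Consistent {A : Type*} [HeytingAlgebra A] (Γ Δ : Set A) : Prop :=
  ¬ ∃ (s t : Finset A), ↑s ⊆ Γ ∧ ↑t ⊆ Δ ∧ s.inf id ≤ t.sup id

theorem consistent_add_left_or_right {A : Type*} [HeytingAlgebra A]
    {Γ Δ : Set A} (h : Consistent Γ Δ) (a : A) :
    Consistent (Γ ∪ {a}) Δ ∨ Consistent Γ (Δ ∪ {a}) := by
  classical
  by_contra hc
  push_neg at hc
  obtain ⟨h1, h2⟩ := hc
  rw [Consistent, not_not] at h1 h2
  obtain ⟨s1, t1, hs1, ht1, hle1⟩ := h1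
  obtain ⟨s2, t2, hs2, ht2, hle2⟩ := h2
  apply h
  refine ⟨(s1.erase a) ∪ s2, t1 ∪ (t2.erase a), ?_, ?_, ?_⟩
  · intro x hx
    simp only [Finset.coe_union, Set.mem_union, Finset.coe_erase, Set.mem_diff,
      Finset.mem_coe] at hx
    rcases hx with ⟨hx1, hxa⟩ | hx2
    · rcases hs1 hx1 with h' | h'
      · exact h'
      · exact absurd h' hxa
    · exact hs2 hx2
  · intro x hx
    simp only [Finset.coe_union, Set.mem_union, Finset.coe_erase, Set.mem_diff,
      Finset.mem_coe] at hx
    rcases hx with hx1 | ⟨hx2, hxa⟩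
    · exact ht1 hx1
    · rcases ht2 hx2 with h' | h'
      · exact h'
      · exact absurd h' hxa
  · set S := ((s1.erase a) ∪ s2).inf id with hS
    set T := (t1 ∪ (t2.erase a)).sup id with hT
    have hSa : S ⊓ a ≤ T := by
      calc S ⊓ a ≤ (s1.erase a).inf id ⊓ a :=
            inf_le_inf_right a (Finset.inf_mono Finset.subset_union_left)
        _ = (insert a (s1.erase a)).inf id := by rw [Finset.inf_insert, id, inf_comm]
        _ ≤ s1.inf id := Finset.inf_mono (Finset.subset_insert_iff.mpr (Finset.Subset.refl _))
        _ ≤ t1.sup id := hle1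
        _ ≤ T := Finset.sup_mono Finset.subset_union_left
    have hS2 : S ≤ a ⊔ T := by
      calc S ≤ s2.inf id := Finset.inf_mono Finset.subset_union_right
        _ ≤ t2.sup id := hle2
        _ ≤ (insert a (t2.erase a)).sup id :=
            Finset.sup_mono (Finset.subset_insert_iff.mpr (Finset.Subset.refl _))
        _ = a ⊔ (t2.erase a).sup id := by rw [Finset.sup_insert, id]
        _ ≤ a ⊔ T := sup_le_sup_left (Finset.sup_mono Finset.subset_union_right) a
    calc S ≤ S ⊓ (a ⊔ T) := le_inf le_rfl hS2
      _ = (S ⊓ a) ⊔ (S ⊓ T) := inf_sup_left S a T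
      _ ≤ T ⊔ T := sup_le_sup hSa inf_le_right
      _ = T := sup_idem T
end

section
/- In a G polyadic Heyting algebra, for all distinct i, j and all x: c_i s_{[j|i]} x = c_j s_{[i|j]} x, and dually q_i s_{[j|i]} x = q_j s_{[i|j]} x. -/
/-- The replacement `[i|j]` sending `i` to `j` and fixing everything else. -/
def replace {α : Type*} [DecidableEq α] (i j : α) : α → α :=
  fun x => if x = i then j else x

/-- A `G` polyadic Heyting algebra: a Heyting algebra with substitutions `s τ`
(for `τ` in a semigroup `G ⊆ αα` containing the identity and all replacements),
finite existential cylindrifications `c J` and universal quantifiers `q J`. -/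
structure GPHA (α : Type*) (A : Type*) [DecidableEq α] [HeytingAlgebra A] where
  G : Set (α → α)
  id_mem : id ∈ G
  comp_mem : ∀ σ τ : α → α, σ ∈ G → τ ∈ G → σ ∘ τ ∈ G
  replace_mem : ∀ i j : α, replace i j ∈ G
  s : (α → α) → A → A
  c : Finset α → A → A
  q : Finset α → A → A
  -- each `s τ` (for `τ ∈ G`) is a Heyting endomorphism
  s_bot : ∀ τ ∈ G, s τ ⊥ = ⊥
  s_inf : ∀ τ ∈ G, ∀ p p' : A, s τ (p ⊓ p') = s τ p ⊓ s τ p'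
  s_sup : ∀ τ ∈ G, ∀ p p' : A, s τ (p ⊔ p') = s τ p ⊔ s τ p'
  s_himp : ∀ τ ∈ G, ∀ p p' : A, s τ (p ⇨ p') = s τ p ⇨ s τ p'
  s_id : ∀ p : A, s id p = p
  s_comp : ∀ σ ∈ G, ∀ τ ∈ G, ∀ p : A, s (σ ∘ τ) p = s σ (s τ p)
  -- each `c J` is an existential quantifier
  c_bot : ∀ J, c J ⊥ = ⊥
  le_c : ∀ J (p : A), p ≤ c J p
  c_inf_c : ∀ J (p p' : A), c J (p ⊓ c J p') = c J p ⊓ c J p'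
  c_himp_c : ∀ J (p p' : A), c J (c J p ⇨ c J p') = c J p ⇨ c J p'
  c_sup_c : ∀ J (p p' : A), c J (c J p ⊔ c J p') = c J p ⊔ c J p'
  c_idem : ∀ J (p : A), c J (c J p) = c J p
  -- each `q J` is a universal quantifier
  q_top : ∀ J, q J ⊤ = ⊤
  q_le : ∀ J (p : A), q J p ≤ p
  q_himp : ∀ J (p p' : A), q J (p ⇨ p') ≤ q J p ⇨ q J p'
  q_idem : ∀ J (p : A), q J (q J p) = q J p
  -- polyadic axioms
  c_empty : ∀ p : A, c ∅ p = p
  q_empty : ∀ p : A, q ∅ p = p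
  c_union : ∀ J J' (p : A), c (J ∪ J') p = c J (c J' p)
  q_union : ∀ J J' (p : A), q (J ∪ J') p = q J (q J' p)
  c_q : ∀ J (p : A), c J (q J p) = q J p
  q_c : ∀ J (p : A), q J (c J p) = c J p
  s_c_agree : ∀ σ ∈ G, ∀ τ ∈ G, ∀ (J : Finset α) (p : A),
      (∀ i ∉ J, σ i = τ i) → s σ (c J p) = s τ (c J p)
  s_q_agree : ∀ σ ∈ G, ∀ τ ∈ G, ∀ (J : Finset α) (p : A),
      (∀ i ∉ J, σ i = τ i) → s σ (q J p) = s τ (q J p)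
  c_s : ∀ σ ∈ G, ∀ (J K : Finset α) (p : A),
      (∀ i, i ∈ K ↔ σ i ∈ J) → Set.InjOn σ ↑K → c J (s σ p) = s σ (c K p)
  q_s : ∀ σ ∈ G, ∀ (J K : Finset α) (p : A),
      (∀ i, i ∈ K ↔ σ i ∈ J) → Set.InjOn σ ↑K → q J (s σ p) = s σ (q K p)

section Aux

variable {α A : Type*} [DecidableEq α] [HeytingAlgebra A] (P : GPHA α A)

lemma replace_comp_replace {i j : α} (hij : i ≠ j) :
    replace j i ∘ replace i j = replace j i := by
  funext k
  by_cases hki : k = i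
  · subst hki; simp [replace, Function.comp, hij, hij.symm]
  · by_cases hkj : k = j
    · subst hkj; simp [replace, Function.comp, hij.symm]
    · simp [replace, Function.comp, hki, hkj]

lemma GPHA.s_mono {τ : α → α} (hτ : τ ∈ P.G) {p p' : A} (h : p ≤ p') :
    P.s τ p ≤ P.s τ p' := by
  have hs := P.s_sup τ hτ p p'
  rw [sup_eq_right.2 h] at hs
  rw [hs]; exact le_sup_left

lemma GPHA.c_mono (J : Finset α) {p p' : A} (h : p ≤ p') :
    P.c J p ≤ P.c J p' := by
  have h1 : p ⊓ P.c J p' = p := inf_eq_left.2 (h.trans (P.le_c J p'))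
  have h2 := P.c_inf_c J p p'
  rw [h1] at h2
  rw [h2]; exact inf_le_right

lemma GPHA.q_mono (J : Finset α) {p p' : A} (h : p ≤ p') :
    P.q J p ≤ P.q J p' := by
  have h1 : p ⇨ p' = ⊤ := himp_eq_top_iff.2 h
  have h2 := P.q_himp J p p'
  rw [h1, P.q_top] at h2
  exact himp_eq_top_iff.mp (top_le_iff.mp h2)

lemma no_mem_empty_iff {i j : α} (hij : i ≠ j) :
    ∀ k, k ∈ (∅ : Finset α) ↔ replace i j k ∈ ({i} : Finset α) := by
  intro k
  simp only [Finset.notMem_empty, false_iff, Finset.mem_singleton, replace]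
  by_cases hki : k = i
  · simp [hki, hij.symm]
  · simp [hki]

/-- `c_i (s_{[i|j]} x) = s_{[i|j]} x` : the image of `s_{[i|j]}` does not depend on `i`. -/
lemma GPHA.c_s_replace {i j : α} (hij : i ≠ j) (x : A) :
    P.c {i} (P.s (replace i j) x) = P.s (replace i j) x := by
  have := P.c_s (replace i j) (P.replace_mem i j) {i} ∅ x (no_mem_empty_iff hij)
    (by simp)
  rwa [P.c_empty] at this

lemma GPHA.q_s_replace {i j : α} (hij : i ≠ j) (x : A) :
    P.q {i} (P.s (replace i j) x) = P.s (replace i j) x := by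
  have := P.q_s (replace i j) (P.replace_mem i j) {i} ∅ x (no_mem_empty_iff hij)
    (by simp)
  rwa [P.q_empty] at this

/-- `s_{[j|i]}` fixes anything of the form `c_j y`. -/
lemma GPHA.s_replace_c {i j : α} (y : A) :
    P.s (replace j i) (P.c {j} y) = P.c {j} y := by
  have := P.s_c_agree (replace j i) (P.replace_mem j i) id P.id_mem {j} y
    (by intro k hk; simp only [Finset.mem_singleton] at hk; simp [replace, hk])
  rw [this, P.s_id]

lemma GPHA.s_replace_q {i j : α} (y : A) :
    P.s (replace j i) (P.q {j} y) = P.q {j} y := by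
  have := P.s_q_agree (replace j i) (P.replace_mem j i) id P.id_mem {j} y
    (by intro k hk; simp only [Finset.mem_singleton] at hk; simp [replace, hk])
  rw [this, P.s_id]

lemma GPHA.c_comm (i j : α) (y : A) :
    P.c {i} (P.c {j} y) = P.c {j} (P.c {i} y) := by
  rw [← P.c_union, ← P.c_union, Finset.union_comm]

lemma GPHA.q_comm (i j : α) (y : A) :
    P.q {i} (P.q {j} y) = P.q {j} (P.q {i} y) := by
  rw [← P.q_union, ← P.q_union, Finset.union_comm]

lemma GPHA.c_key {i j : α} (hij : i ≠ j) (x : A) :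
    P.c {i} (P.s (replace j i) x) ≤ P.c {j} (P.s (replace i j) x) := by
  set v := P.c {j} (P.s (replace i j) x) with hv
  -- s_{[j|i]} x ≤ v
  have h1 : P.s (replace i j) x ≤ v := P.le_c _ _
  have h2 : P.s (replace j i) (P.s (replace i j) x) = P.s (replace j i) x := by
    rw [← P.s_comp _ (P.replace_mem j i) _ (P.replace_mem i j),
      replace_comp_replace hij]
  have h3 : P.s (replace j i) v = v := P.s_replace_c (i := i) _
  have h4 : P.s (replace j i) x ≤ v := by
    have := P.s_mono (P.replace_mem j i) h1
    rwa [h2, h3] at this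
  -- c_i v = v
  have h5 : P.c {i} v = v := by
    rw [hv, P.c_comm, P.c_s_replace hij]
  calc P.c {i} (P.s (replace j i) x) ≤ P.c {i} v := P.c_mono _ h4
    _ = v := h5

lemma GPHA.q_key {i j : α} (hij : i ≠ j) (x : A) :
    P.q {j} (P.s (replace i j) x) ≤ P.q {i} (P.s (replace j i) x) := by
  set v := P.q {j} (P.s (replace i j) x) with hv
  have h1 : v ≤ P.s (replace i j) x := P.q_le _ _
  have h2 : P.s (replace j i) (P.s (replace i j) x) = P.s (replace j i) x := by
    rw [← P.s_comp _ (P.replace_mem j i) _ (P.replace_mem i j),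
      replace_comp_replace hij]
  have h3 : P.s (replace j i) v = v := P.s_replace_q (i := i) _
  have h4 : v ≤ P.s (replace j i) x := by
    have := P.s_mono (P.replace_mem j i) h1
    rwa [h2, h3] at this
  have h5 : P.q {i} v = v := by
    rw [hv, P.q_comm, P.q_s_replace hij]
  calc v = P.q {i} v := h5.symm
    _ ≤ P.q {i} (P.s (replace j i) x) := P.q_mono _ h4

end Aux

theorem c_s_exchange {α A : Type*} [DecidableEq α]
    [HeytingAlgebra A] (P : GPHA α A)
    (swap_mem : ∀ i j : α, (Equiv.swap i j : α → α) ∈ P.G)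
    {i j : α} (hij : i ≠ j) (x : A) :
    P.c {i} (P.s (replace j i) x) = P.c {j} (P.s (replace i j) x) ∧
      P.q {i} (P.s (replace j i) x) = P.q {j} (P.s (replace i j) x) := by
  exact ⟨le_antisymm (P.c_key hij x) (P.c_key hij.symm x),
    le_antisymm (P.q_key hij.symm x) (P.q_key hij x)⟩
end

section
/- In a G polyadic Heyting algebra, suppose u ≠ j, and u ∉ Δa ∪ Δp ∪ Δδ (i.e. c_u a = a, c_u p = p, c_u δ = δ). If a ⊓ c_j p ⊓ s_{[j|u]} p ≤ δ, then a ⊓ c_j p ≤ δ. (This is the key step showing that adding a witness s_{[j|u]} p to a consistent theory containing c_j p preserves consistency.) -/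
theorem witness_preserves_consistency {α A : Type*} [DecidableEq α]
    [HeytingAlgebra A] (P : GPHA α A) {u j : α} (huj : u ≠ j) {a p δ : A}
    (ha : P.c {u} a = a) (hp : P.c {u} p = p) (hδ : P.c {u} δ = δ)
    (h : a ⊓ P.c {j} p ⊓ P.s (replace j u) p ≤ δ) :
    a ⊓ P.c {j} p ≤ δ := by
  classical
  set σ := replace j u with hσdef
  set ρ := replace u j with hρdef
  have hσG : σ ∈ P.G := P.replace_mem j u
  have hρG : ρ ∈ P.G := P.replace_mem u j
  -- monotonicity of c
  have cmono : ∀ (J : Finset α) {x y : A}, x ≤ y → P.c J x ≤ P.c J y := by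
    intro J x y hxy
    have hx : x ⊓ P.c J y = x := inf_eq_left.mpr (hxy.trans (P.le_c J y))
    have := P.c_inf_c J x y
    rw [hx] at this
    rw [this]
    exact inf_le_right
  -- monotonicity of s
  have smono : ∀ τ ∈ P.G, ∀ {x y : A}, x ≤ y → P.s τ x ≤ P.s τ y := by
    intro τ hτ x y hxy
    have hx : x ⊓ y = x := inf_eq_left.mpr hxy
    have := P.s_inf τ hτ x y
    rw [hx] at this
    rw [this]
    exact inf_le_right
  -- s ρ p = p
  have hsρp : P.s ρ p = p := by
    have hagree : ∀ i ∉ ({u} : Finset α), ρ i = id i := by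
      intro i hi
      simp only [Finset.mem_singleton] at hi
      simp [hρdef, replace, hi]
    have := P.s_c_agree ρ hρG id P.id_mem {u} p hagree
    rw [hp] at this
    rw [this, P.s_id]
  -- ρ ∘ σ = ρ
  have hcomp : ρ ∘ σ = ρ := by
    funext x
    by_cases hx : x = j <;> by_cases hx' : x = u <;>
      simp [hρdef, hσdef, replace, hx, hx', huj, Ne.symm huj]
  set q := P.c {u} (P.s σ p) with hqdef
  -- p ≤ q
  have hpq : p ≤ q := by
    have h1 : P.s σ p ≤ q := P.le_c {u} (P.s σ p)
    have h2 : P.s ρ (P.s σ p) ≤ P.s ρ q := smono ρ hρG h1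
    have h3 : P.s ρ (P.s σ p) = p := by
      rw [← P.s_comp ρ hρG σ hσG, hcomp, hsρp]
    have h4 : P.s ρ q = q := by
      have hagree : ∀ i ∉ ({u} : Finset α), ρ i = id i := by
        intro i hi
        simp only [Finset.mem_singleton] at hi
        simp [hρdef, replace, hi]
      rw [hqdef, P.s_c_agree ρ hρG id P.id_mem {u} (P.s σ p) hagree, P.s_id]
    rw [h3, h4] at h2
    exact h2
  -- c {j} (s σ p) = s σ p
  have hcjs : P.c {j} (P.s σ p) = P.s σ p := by
    have := P.c_s σ hσG {j} ∅ p (by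
      intro i
      simp only [Finset.notMem_empty, false_iff, Finset.mem_singleton]
      by_cases hi : i = j <;> simp [hσdef, replace, hi, huj, Ne.symm huj]
      ) (by simp)
    rw [this, P.c_empty]
  -- c {j} q = q
  have hcjq : P.c {j} q = q := by
    rw [hqdef, ← P.c_union, Finset.union_comm, P.c_union, hcjs]
  -- c {j} p ≤ q
  have hcjpq : P.c {j} p ≤ q := by
    calc P.c {j} p ≤ P.c {j} q := cmono {j} hpq
    _ = q := hcjq
  -- c {u} (c {j} p) = c {j} p
  have hcu_cjp : P.c {u} (P.c {j} p) = P.c {j} p := by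
    rw [← P.c_union, Finset.union_comm, P.c_union, hp]
  -- y := a ⊓ c {j} p is fixed by c {u}
  set y := a ⊓ P.c {j} p with hydef
  have hcy : P.c {u} y = y := by
    have h1 : y = a ⊓ P.c {u} (P.c {j} p) := by rw [hcu_cjp]
    rw [h1, P.c_inf_c, ha, hcu_cjp]
  -- apply c {u} to h
  have h' : P.c {u} (P.s σ p ⊓ P.c {u} y) ≤ δ := by
    have : P.s σ p ⊓ P.c {u} y = y ⊓ P.s σ p := by rw [hcy, inf_comm]
    rw [this]
    calc P.c {u} (y ⊓ P.s σ p) ≤ P.c {u} δ := cmono {u} h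
    _ = δ := hδ
  rw [P.c_inf_c] at h'
  rw [hcy] at h'
  -- conclude
  have hyq : y ≤ q := le_trans inf_le_right hcjpq
  calc y = P.c {u} (P.s σ p) ⊓ y := by
        rw [inf_eq_right.mpr (by rw [← hqdef]; exact hyq)]
  _ ≤ δ := h'
end

section
/- In a G polyadic Heyting equality algebra, for all indices k, l, u with k ≠ l: d_{kl} ⊓ d_{lu} ≤ d_{ku}. -/
/-- A `G` polyadic Heyting equality algebra: a `G` polyadic Heyting algebra
with diagonal elements `d i j`. -/
structure GPHAE (α : Type*) (A : Type*) [DecidableEq α] [HeytingAlgebra A]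
    extends GPHA α A where
  d : α → α → A
  d_refl : ∀ k : α, d k k = ⊤
  s_d : ∀ τ ∈ toGPHA.G, ∀ k l : α, toGPHA.s τ (d k l) = d (τ k) (τ l)
  d_sub : ∀ (k l : α) (x : A), x ⊓ d k l ≤ toGPHA.s (replace k l) x

theorem diagonal_transitivity {α A : Type*} [DecidableEq α]
    [HeytingAlgebra A] (P : GPHAE α A) {k l u : α} (hkl : k ≠ l) :
    P.d k l ⊓ P.d l u ≤ P.d k u := by
  have h := P.d_sub l u (P.d k l)
  rw [P.s_d (replace l u) (P.replace_mem l u) k l] at h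
  simpa [replace, hkl] using h
end
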